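/- (§4.4, stability forces the five smallest points to be consecutive vertices in type E₈.) Let (V₀, …, V₂₉) be a stable 30-gon of type E8 with inner points W_j. Then there exists m ∈ ℤ/30 such that each of V_m, V_{m+1}, V_{m+2}, V_{m+3}, V_{m+4} is smaller, in the order on ℂ, than every W_k (k ∈ ℤ/30) and than every V_i with i ∉ {m, m+1, m+2, m+3, m+4}. In particular, the five smallest of the 60 points {V_j} ∪ {W_j} are five consecutive vertices of the 30-gon. -/

import Mathlib

/-!
The order `cLt` is the lexicographic order on `(Im z, Re z)`, pulled back along a real-linear map,
so the sets `{z | cLt z X}` and `{z | ¬ cLt z X}` are both convex. In a convex polygon two vertices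
below `X` and two vertices not below `X` therefore cannot alternate around the boundary: the two
diagonals they span would cross. Growing the set of smallest vertices one at a time, it follows
that the `s` smallest vertices form a cyclic arc, whose largest vertex is one of its two ends.
If `2 s < n`, both neighbours at distance `s` of an end of this arc lie above it, and the level-`s`
diagonal-gon lies in the angle between the two diagonals from that end to these neighbours, so
every point of the diagonal-gon lies above the whole arc. For a stable `E8` 30-gon take `s = 5`.
-/

noncomputable section

/-- The (strict) total order on `ℂ`: compare imaginary parts first, then real parts. -/
def cLt (a b : ℂ) : Prop := a.im < b.im ∨ (a.im = b.im ∧ a.re < b.re)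

/-- The corresponding non-strict order on `ℂ`. -/
def cLe (a b : ℂ) : Prop := cLt a b ∨ a = b

/-- `cross u v = Im (conj u * v)`. -/
def cross (u v : ℂ) : ℝ := ((starRingEnd ℂ) u * v).im

/-- A positively convex `h`-gon: every other vertex lies strictly to the left of each
directed edge from `V (j-1)` to `V j`. -/
def PosConvex {h : ℕ} (V : ZMod h → ℂ) : Prop :=
  ∀ j i : ZMod h, i ≠ j - 1 → i ≠ j →
    0 < cross (V j - V (j - 1)) (V i - V (j - 1))

/-- The (open) level-`s` diagonal-gon of an `h`-gon. -/
def DiagGon {h : ℕ} (V : ZMod h → ℂ) (s : ℕ) : Set ℂ :=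
  {P : ℂ | ∀ j : ZMod h, 0 < cross (V (j + (s : ZMod h)) - V j) (P - V j)}

/-- Edge vectors of an `h`-gon. -/
def zEdge {h : ℕ} (V : ZMod h → ℂ) (j : ZMod h) : ℂ := V j - V (j - 1)

/-- A 30-gon of type E8. -/
def IsE8Gon (V : ZMod 30 → ℂ) : Prop :=
  (∀ j : ZMod 30, V (j + 15) = -V j) ∧
  (∀ j : ZMod 30, zEdge V j + zEdge V (j + 10) + zEdge V (j + 20) = 0) ∧
  (∀ j : ZMod 30,
    zEdge V j + zEdge V (j + 6) + zEdge V (j + 12) + zEdge V (j + 18) + zEdge V (j + 24) = 0)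

/-- The inner points `W j` of a 30-gon of type E8. -/
def WE8 (V : ZMod 30 → ℂ) (j : ZMod 30) : ℂ := V (j + 1) + zEdge V (j + 11)

/-- A stable 30-gon of type E8. -/
def IsStableE8Gon (V : ZMod 30 → ℂ) : Prop :=
  IsE8Gon V ∧ PosConvex V ∧ ∀ j : ZMod 30, WE8 V j ∈ DiagGon V 5

lemma cross_eq (u v : ℂ) : cross u v = u.re * v.im - u.im * v.re := by
  simp [cross, Complex.mul_im]
  ring

lemma cross_swap (u v : ℂ) : cross u v = -cross v u := by
  simp only [cross_eq]
  ring

lemma cross_sub_sub_rotate (A B C : ℂ) : cross (B - A) (C - A) = cross (C - B) (A - B) := by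
  simp only [cross_eq, Complex.sub_re, Complex.sub_im]
  ring

lemma cross_sub_base_eq (A B X : ℂ) : cross (B - A) (X - B) = cross (B - A) (X - A) := by
  simp only [cross_eq, Complex.sub_re, Complex.sub_im]
  ring

lemma cross_smul_eq_add (d₁ d₂ u : ℂ) : cross d₁ d₂ • u = cross u d₂ • d₁ + cross d₁ u • d₂ := by
  apply Complex.ext <;>
    simp only [cross_eq, Complex.add_re, Complex.add_im, Complex.real_smul, Complex.mul_re,
      Complex.mul_im, Complex.ofReal_re, Complex.ofReal_im] <;> ring

/-- If `X` lies to the left of `AB` and of `BC` but outside the triangle `ABC` (a line through `X`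
with direction `w` has `A`, `B`, `C` strictly on its left), then `X` lies to the left of `AC`. -/
lemma cross_pos_of_cross_pos_of_separating {A B C X w : ℂ} (hB : 0 < cross (B - A) (X - A))
    (hC : 0 < cross (C - B) (X - B)) (hwA : 0 < cross w (A - X)) (hwB : 0 < cross w (B - X))
    (hwC : 0 < cross w (C - X)) : 0 < cross (C - A) (X - A) := by
  -- the barycentric coordinates of `X` with respect to `ABC`
  have bary : cross (C - B) (X - B) * cross w (A - X) + cross (A - C) (X - C) * cross w (B - X)
      + cross (B - A) (X - A) * cross w (C - X) = 0 := by
    simp only [cross_eq, Complex.sub_re, Complex.sub_im]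
    ring
  have hAC : cross (C - A) (X - A) = -cross (A - C) (X - C) := by
    simp only [cross_eq, Complex.sub_re, Complex.sub_im]
    ring
  rw [hAC]
  nlinarith [mul_pos hC hwA, mul_pos hB hwC]

lemma segment_inter_segment_nonempty {P Q R S : ℂ} (hR : cross (Q - P) (R - P) < 0)
    (hS : 0 < cross (Q - P) (S - P)) (hP : 0 < cross (S - R) (P - R))
    (hQ : cross (S - R) (Q - R) < 0) : (segment ℝ P Q ∩ segment ℝ R S).Nonempty := by
  set α := cross (Q - P) (R - P)
  set β := cross (Q - P) (S - P)
  set γ := cross (S - R) (P - R)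
  set δ := cross (S - R) (Q - R)
  -- the witness is the intersection of the lines `PQ` and `RS`; both denominators equal
  -- `cross (Q - P) (S - R)`
  have hD : β - α = γ - δ := by
    simp only [α, β, γ, δ, cross_eq, Complex.sub_re, Complex.sub_im]
    ring
  have hpos : 0 < β - α := by linarith
  refine ⟨(β / (β - α)) • R + (-α / (β - α)) • S,
    ⟨-δ / (β - α), γ / (β - α), div_nonneg (by linarith) hpos.le, div_nonneg hP.le hpos.le, ?_, ?_⟩,
    ⟨β / (β - α), -α / (β - α), div_nonneg hS.le hpos.le, div_nonneg (by linarith) hpos.le,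
      ?_, rfl⟩⟩
  · field_simp
    linarith
  · simp only [Complex.real_smul]
    apply Complex.ext <;>
      simp only [α, β, γ, δ, cross_eq, Complex.add_re, Complex.add_im, Complex.mul_re,
        Complex.mul_im, Complex.ofReal_re, Complex.ofReal_im, Complex.sub_re, Complex.sub_im] <;>
      field_simp <;> ring
  · field_simp
    ring

instance Prod.Lex.posSMulStrictMono {𝕜 α β : Type*} [Zero 𝕜] [Preorder 𝕜] [Preorder α]
    [Preorder β] [SMul 𝕜 α] [SMul 𝕜 β] [PosSMulStrictMono 𝕜 α] [PosSMulStrictMono 𝕜 β] :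
    PosSMulStrictMono 𝕜 (Lex (α × β)) where
  smul_lt_smul_of_pos_left c hc x y hxy := by
    rw [Prod.Lex.lt_iff] at hxy ⊢
    simp only [ofLex_smul, Prod.smul_fst, Prod.smul_snd]
    rcases hxy with h | ⟨h, h'⟩
    · exact Or.inl (smul_lt_smul_of_pos_left h hc)
    · exact Or.inr ⟨by rw [h], smul_lt_smul_of_pos_left h' hc⟩

/-- `cLt` is the order pulled back along `z ↦ toLex (z.im, z.re)`. -/
def lexKey : ℂ →ₗ[ℝ] Lex (ℝ × ℝ) :=
  (toLexLinearEquiv ℝ (ℝ × ℝ)).toLinearMap ∘ₗ Complex.imLm.prod Complex.reLm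

lemma lexKey_apply (z : ℂ) : lexKey z = toLex (z.im, z.re) := rfl

lemma lexKey_injective : Function.Injective lexKey := fun a b h => by
  rw [lexKey_apply, lexKey_apply, toLex_inj, Prod.mk.injEq] at h
  exact Complex.ext h.2 h.1

lemma cLt_iff_lexKey_lt {a b : ℂ} : cLt a b ↔ lexKey a < lexKey b := by
  simp [cLt, lexKey_apply, Prod.Lex.lt_iff]

lemma cLt_irrefl (a : ℂ) : ¬ cLt a a := by
  simp [cLt_iff_lexKey_lt]

lemma cLt_trans {a b c : ℂ} (hab : cLt a b) (hbc : cLt b c) : cLt a c := by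
  rw [cLt_iff_lexKey_lt] at *
  exact hab.trans hbc

lemma cLt_asymm {a b : ℂ} (h : cLt a b) : ¬ cLt b a := fun h' => cLt_irrefl a (cLt_trans h h')

lemma cLt_or_cLt_of_ne {a b : ℂ} (h : a ≠ b) : cLt a b ∨ cLt b a := by
  simp only [cLt_iff_lexKey_lt]
  exact lt_or_gt_of_ne (lexKey_injective.ne h)

lemma convex_setOf_cLt (X : ℂ) : Convex ℝ {z | cLt z X} := by
  have h : {z | cLt z X} = lexKey ⁻¹' Set.Iio (lexKey X) := by
    ext
    simp [cLt_iff_lexKey_lt]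
  rw [h]
  exact (convex_Iio _).linear_preimage lexKey

lemma convex_setOf_not_cLt (X : ℂ) : Convex ℝ {z | ¬ cLt z X} := by
  have h : {z | ¬ cLt z X} = lexKey ⁻¹' Set.Ici (lexKey X) := by
    ext
    simp [cLt_iff_lexKey_lt]
  rw [h]
  exact (convex_Ici _).linear_preimage lexKey

/-- By `cross_smul_eq_add`, `u` is a positive combination of `-d₁` and `d₂`. -/
lemma cLt_zero_of_cross_pos {d₁ d₂ u : ℂ} (hd : 0 < cross d₁ d₂) (h₁ : 0 < cross d₁ u)
    (h₂ : 0 < cross d₂ u) (hd₁ : cLt 0 (-d₁)) (hd₂ : cLt 0 d₂) : cLt 0 u := by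
  rw [cLt_iff_lexKey_lt, map_zero] at *
  have key : cross d₁ d₂ • lexKey u = cross d₂ u • lexKey (-d₁) + cross d₁ u • lexKey d₂ := by
    rw [← map_smul, ← map_smul, ← map_smul, ← map_add, cross_smul_eq_add, cross_swap u d₂,
      neg_smul, smul_neg]
  refine (smul_pos_iff_of_pos_left hd).1 ?_
  rw [key]
  exact add_pos (smul_pos h₂ hd₁) (smul_pos h₁ hd₂)

lemma cLt_iff_cLt_zero_sub {a b : ℂ} : cLt a b ↔ cLt 0 (b - a) := by
  simp only [cLt_iff_lexKey_lt, map_zero, map_sub, sub_pos]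

lemma cLe_of_not_cLt {a b : ℂ} (h : ¬ cLt a b) : cLe b a := by
  rcases eq_or_ne b a with rfl | hne
  · exact Or.inr rfl
  · exact Or.inl ((cLt_or_cLt_of_ne hne).resolve_right h)

lemma cLt_of_cLt_of_cLe {a b c : ℂ} (hab : cLt a b) (hbc : cLe b c) : cLt a c := by
  rcases hbc with hbc | rfl
  exacts [cLt_trans hab hbc, hab]

namespace ZMod

variable {n : ℕ}

lemma add_natCast_ne_add_natCast (x : ZMod n) {a b : ℕ} (ha : a < n) (hb : b < n) (h : a ≠ b) :
    x + (a : ZMod n) ≠ x + b := by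
  rwa [Ne, add_right_inj, ZMod.natCast_eq_natCast_iff', Nat.mod_eq_of_lt ha, Nat.mod_eq_of_lt hb]

lemma add_natCast_add_natCast_of_add_eq (x : ZMod n) {a b c : ℕ} (h : a + b = c + n) :
    x + a + b = x + c := by
  rw [add_assoc, ← Nat.cast_add, h, Nat.cast_add, ZMod.natCast_self, add_zero]

end ZMod

section Polygon

variable {n : ℕ} {V : ZMod n → ℂ}

lemma PosConvex.cross_edge_pos (hV : PosConvex V) (j : ZMod n) {a b : ℕ} (ha : a + 1 < n)
    (hb : b < n) (hba : b ≠ a) (hba' : b ≠ a + 1) :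
    0 < cross (V (j + ↑(a + 1)) - V (j + a)) (V (j + b) - V (j + a)) := by
  have hpred : j + ((a + 1 : ℕ) : ZMod n) - 1 = j + a := by
    push_cast
    ring
  have h := hV (j + ↑(a + 1)) (j + b)
    (by rw [hpred]; exact ZMod.add_natCast_ne_add_natCast j hb (by omega) hba)
    (ZMod.add_natCast_ne_add_natCast j hb ha hba')
  rwa [hpred] at h

lemma PosConvex.cross_pos (hV : PosConvex V) (j : ZMod n) {s r : ℕ} (hs : 0 < s) (hsr : s < r)
    (hr : r < n) : 0 < cross (V (j + s) - V j) (V (j + r) - V j) := by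
  induction s, hs using Nat.le_induction generalizing r with
  | base => simpa using hV.cross_edge_pos j (a := 0) (b := r) (by omega) hr (by omega) (by omega)
  | succ s hs ih =>
    rcases (show r = s + 1 + 1 ∨ s + 2 < r by omega) with rfl | hr₂
    · rw [cross_sub_sub_rotate]
      simpa using hV.cross_edge_pos j (a := s + 1) (b := 0) hr (by omega) (by omega) (by omega)
    · -- separate `V j, V (j + s), V (j + (s + 1))` from `V (j + r)` by the edge ending there
      have hw : ∀ b < n, b ≠ r - 1 → b ≠ r →
          0 < cross (V (j + r) - V (j + ↑(r - 1))) (V (j + b) - V (j + r)) := by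
        intro b hb h₁ h₂
        have h := hV.cross_edge_pos j (a := r - 1) (b := b) (by omega) hb h₁ (by omega)
        rwa [Nat.sub_add_cancel (by omega), ← cross_sub_base_eq] at h
      refine cross_pos_of_cross_pos_of_separating (ih (by omega) hr)
        (hV.cross_edge_pos j (a := s) (b := r) (by omega) hr (by omega) (by omega))
        (by simpa using hw 0 (by omega) (by omega) (by omega))
        (hw s (by omega) (by omega) (by omega)) (hw (s + 1) (by omega) (by omega) (by omega))

lemma PosConvex.cross_pos_of_lt_of_lt (hV : PosConvex V) (j : ZMod n) {a b c : ℕ} (hab : a < b)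
    (hbc : b < c) (hc : c < n) :
    0 < cross (V (j + b) - V (j + a)) (V (j + c) - V (j + a)) := by
  have h := hV.cross_pos (j + a) (s := b - a) (r := c - a) (by omega) (by omega) (by omega)
  rwa [add_assoc, ← Nat.cast_add, Nat.add_sub_cancel' hab.le, add_assoc, ← Nat.cast_add,
    Nat.add_sub_cancel' (hab.trans hbc).le] at h

lemma PosConvex.injective (hV : PosConvex V) (hn : 3 ≤ n) : Function.Injective V := by
  have : NeZero n := ⟨by omega⟩
  intro i k hik
  by_contra hne
  set d := (k - i).val
  have hk : k = i + d := by simp [d]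
  have hd : 0 < d := by
    rw [Nat.pos_iff_ne_zero, Ne, ZMod.val_eq_zero, sub_eq_zero]
    exact Ne.symm hne
  have hdn : d < n := ZMod.val_lt _
  rw [hk] at hik
  rcases (show d + 1 < n ∨ 1 < d by omega) with h | h
  · simpa [← hik, cross] using hV.cross_pos i hd d.lt_succ_self h
  · simpa [← hik, cross] using hV.cross_pos i zero_lt_one h hdn

/-- The diagonals `V p — V (p + b)` and `V (p + a) — V (p + c)` cross, and the crossing point would
lie in the convex set `{z | cLt z X}` as well as in its convex complement. -/
lemma PosConvex.not_alternating (hV : PosConvex V) (p : ZMod n) {a b c : ℕ} (ha : 0 < a)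
    (hab : a < b) (hbc : b < c) (hc : c < n) {X : ℂ} (hp : cLt (V p) X)
    (hb : cLt (V (p + b)) X) (ha' : ¬ cLt (V (p + a)) X) (hc' : ¬ cLt (V (p + c)) X) : False := by
  obtain ⟨Y, hYPQ, hYRS⟩ := segment_inter_segment_nonempty (P := V p) (Q := V (p + b))
    (R := V (p + a)) (S := V (p + c))
    (by rw [cross_swap]; exact neg_neg_of_pos (hV.cross_pos p ha hab (by omega)))
    (hV.cross_pos p (by omega) hbc hc)
    (by rw [← cross_sub_sub_rotate]; exact hV.cross_pos p ha (by omega) hc)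
    (by rw [cross_swap]; exact neg_neg_of_pos (hV.cross_pos_of_lt_of_lt p hab hbc hc))
  exact (convex_setOf_not_cLt X).segment_subset ha' hc' hYRS
    ((convex_setOf_cLt X).segment_subset hp hb hYPQ)

/-- `V m, V (m + 1), …, V (m + (k - 1))` are the `k` smallest vertices. -/
def IsLowestArc (V : ZMod n → ℂ) (m : ZMod n) (k : ℕ) : Prop :=
  ∀ t r : ℕ, t < k → k ≤ r → r < n → cLt (V (m + t)) (V (m + r))

lemma PosConvex.exists_isLowestArc_one (hV : PosConvex V) (hn : 3 ≤ n) :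
    ∃ m, IsLowestArc V m 1 := by
  have : NeZero n := ⟨by omega⟩
  obtain ⟨m, hm⟩ := Finite.exists_min (lexKey ∘ V)
  refine ⟨m, fun t r ht hr hrn => ?_⟩
  obtain rfl : t = 0 := by omega
  have hne : m ≠ m + r := by
    simpa using ZMod.add_natCast_ne_add_natCast m (a := 0) (b := r) (by omega) hrn (by omega)
  rw [Nat.cast_zero, add_zero, cLt_iff_lexKey_lt]
  exact (hm _).lt_of_ne (lexKey_injective.ne ((hV.injective hn).ne hne))

lemma IsLowestArc.succ (hV : PosConvex V) {m : ZMod n} {k : ℕ} (h : IsLowestArc V m k)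
    (hk : 0 < k) (hkn : k + 1 < n) (hlt : cLt (V (m + k)) (V (m + ↑(n - 1)))) :
    IsLowestArc V m (k + 1) := by
  intro t r ht hr hrn
  rcases (show t < k ∨ t = k by omega) with ht | rfl
  · exact h t r ht (by omega) hrn
  rcases (show r = n - 1 ∨ r < n - 1 by omega) with rfl | hr'
  · exact hlt
  have hne := (hV.injective (by omega)).ne
    (ZMod.add_natCast_ne_add_natCast m (a := t) (b := r) (by omega) hrn (by omega))
  refine (cLt_or_cLt_of_ne hne).resolve_right fun hrt => ?_
  exact hV.not_alternating m hk (by omega) hr' (by omega)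
    (by simpa using h 0 t hk le_rfl (by omega)) hrt (cLt_irrefl _) (cLt_asymm hlt)

lemma IsLowestArc.pred (hV : PosConvex V) {m : ZMod n} {k : ℕ} (h : IsLowestArc V m k)
    (hk : 0 < k) (hkn : k + 1 < n) (hlt : cLt (V (m + ↑(n - 1))) (V (m + k))) :
    IsLowestArc V (m + ↑(n - 1)) (k + 1) := by
  intro t r ht hr hrn
  rw [ZMod.add_natCast_add_natCast_of_add_eq m (b := r) (c := r - 1) (by omega)]
  rcases (show t = 0 ∨ 0 < t by omega) with rfl | ht₀
  · rw [Nat.cast_zero, add_zero]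
    rcases (show r - 1 = k ∨ k < r - 1 by omega) with hr₁ | hr₁
    · rwa [hr₁]
    have hne := (hV.injective (by omega)).ne
      (ZMod.add_natCast_ne_add_natCast m (a := n - 1) (b := r - 1) (by omega) (by omega)
        (by omega))
    refine (cLt_or_cLt_of_ne hne).resolve_right fun hrt => ?_
    exact hV.not_alternating m hk hr₁ (by omega) (by omega)
      (by simpa using h 0 (n - 1) hk (by omega) (by omega)) hrt (cLt_asymm hlt) (cLt_irrefl _)
  · rw [ZMod.add_natCast_add_natCast_of_add_eq m (b := t) (c := t - 1) (by omega)]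
    exact h (t - 1) (r - 1) (by omega) (by omega) (by omega)

lemma PosConvex.exists_isLowestArc (hV : PosConvex V) {k : ℕ} (hk : 0 < k) (hkn : k < n)
    (hn : 3 ≤ n) : ∃ m, IsLowestArc V m k := by
  induction k, hk using Nat.le_induction with
  | base => exact hV.exists_isLowestArc_one hn
  | succ k hk ih =>
    obtain ⟨m, hm⟩ := ih (by omega)
    have hne := (hV.injective hn).ne
      (ZMod.add_natCast_ne_add_natCast m (a := k) (b := n - 1) (by omega) (by omega) (by omega))
    rcases cLt_or_cLt_of_ne hne with hlt | hlt
    · exact ⟨m, hm.succ hV hk hkn hlt⟩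
    · exact ⟨_, hm.pred hV hk hkn hlt⟩

/-- The largest vertex of a lowest arc is one of its two ends. -/
lemma IsLowestArc.cLt_of_cLt_of_cLt (hV : PosConvex V) {m : ZMod n} {k : ℕ}
    (h : IsLowestArc V m k) (hkn : k < n) {X : ℂ} (h₀ : cLt (V m) X)
    (h₁ : cLt (V (m + ↑(k - 1))) X) {t : ℕ} (ht : t < k) : cLt (V (m + t)) X := by
  by_contra hX
  have hle := cLe_of_not_cLt hX
  rcases (show t = 0 ∨ t = k - 1 ∨ (0 < t ∧ t < k - 1) by omega) with rfl | rfl | ⟨ht₀, ht₁⟩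
  · simp only [Nat.cast_zero, add_zero] at hX
    exact hX h₀
  · exact hX h₁
  · exact hV.not_alternating m ht₀ ht₁ (by omega) hkn (cLt_of_cLt_of_cLe h₀ hle)
      (cLt_of_cLt_of_cLe h₁ hle) (cLt_irrefl _) (cLt_asymm (h t k ht le_rfl hkn))

/-- The level-`s` diagonal-gon lies in the angle at `V (j + s)` between the diagonals to `V j`
and to `V (j + 2 * s)`. -/
lemma PosConvex.cLt_of_mem_diagGon (hV : PosConvex V) (j : ZMod n) {s : ℕ} (hs : 0 < s)
    (hsn : 2 * s < n) (h₁ : cLt (V (j + s)) (V j)) (h₂ : cLt (V (j + s)) (V (j + ↑(2 * s))))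
    {P : ℂ} (hP : P ∈ DiagGon V s) : cLt (V (j + s)) P := by
  have hj : j + (s : ZMod n) + s = j + ↑(2 * s) := by
    push_cast
    ring
  have hd : 0 < cross (V (j + s) - V j) (V (j + ↑(2 * s)) - V (j + s)) := by
    rw [cross_sub_base_eq]
    exact hV.cross_pos j hs (by omega) hsn
  have hP₁ : 0 < cross (V (j + s) - V j) (P - V (j + s)) := by
    rw [cross_sub_base_eq]
    exact hP j
  have hP₂ : 0 < cross (V (j + ↑(2 * s)) - V (j + s)) (P - V (j + s)) := by
    rw [← hj]
    exact hP (j + s)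
  rw [cLt_iff_cLt_zero_sub] at h₁ h₂ ⊢
  exact cLt_zero_of_cross_pos hd hP₁ hP₂ (by rwa [neg_sub]) h₂

theorem PosConvex.exists_isLowestArc_cLt_of_mem_diagGon (hV : PosConvex V) {s : ℕ} (hs : 0 < s)
    (hsn : 2 * s < n) :
    ∃ m, IsLowestArc V m s ∧ ∀ P ∈ DiagGon V s, ∀ t < s, cLt (V (m + t)) P := by
  obtain ⟨m, hm⟩ := hV.exists_isLowestArc hs (by omega) (by omega)
  refine ⟨m, hm, fun P hP t ht => hm.cLt_of_cLt_of_cLt hV (by omega) ?_ ?_ ht⟩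
  · -- the end `V m`, between `V (m - s)` and `V (m + s)`
    have h := hV.cLt_of_mem_diagGon (m + ↑(n - s)) hs hsn ?_ ?_ hP
    · rwa [ZMod.add_natCast_add_natCast_of_add_eq m (c := 0) (by omega), Nat.cast_zero,
        add_zero] at h
    · rw [ZMod.add_natCast_add_natCast_of_add_eq m (c := 0) (by omega)]
      exact hm 0 (n - s) hs (by omega) (by omega)
    · rw [ZMod.add_natCast_add_natCast_of_add_eq m (c := 0) (by omega),
        ZMod.add_natCast_add_natCast_of_add_eq m (c := s) (by omega)]
      exact hm 0 s hs le_rfl (by omega)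
  · -- the end `V (m + (s - 1))`, between `V (m - 1)` and `V (m + (2 * s - 1))`
    have h := hV.cLt_of_mem_diagGon (m + ↑(n - 1)) hs hsn ?_ ?_ hP
    · rwa [ZMod.add_natCast_add_natCast_of_add_eq m (c := s - 1) (by omega)] at h
    · rw [ZMod.add_natCast_add_natCast_of_add_eq m (c := s - 1) (by omega)]
      exact hm (s - 1) (n - 1) (by omega) (by omega) (by omega)
    · rw [ZMod.add_natCast_add_natCast_of_add_eq m (c := s - 1) (by omega),
        ZMod.add_natCast_add_natCast_of_add_eq m (c := 2 * s - 1) (by omega)]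
      exact hm (s - 1) (2 * s - 1) (by omega) (by omega) (by omega)

end Polygon

lemma mem_five_consecutive_iff {m t : ZMod 30} :
    t ∈ ({m, m + 1, m + 2, m + 3, m + 4} : Set (ZMod 30)) ↔ (t - m).val < 5 := by
  obtain ⟨d, rfl⟩ : ∃ d, t = m + d := ⟨t - m, by ring⟩
  simp only [add_sub_cancel_left, Set.mem_insert_iff, Set.mem_singleton_iff, add_eq_left,
    add_right_inj]
  revert d
  decide

/-- (§4.4.) In a stable 30-gon of type `E8`, the five smallest of the 60 points
`{V j} ∪ {W j}` are five consecutive vertices. -/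
theorem e8_five_smallest_consecutive (V : ZMod 30 → ℂ) (hV : IsStableE8Gon V) :
    ∃ m : ZMod 30, ∀ t : ZMod 30,
      t ∈ ({m, m + 1, m + 2, m + 3, m + 4} : Set (ZMod 30)) →
      (∀ k : ZMod 30, cLt (V t) (WE8 V k)) ∧
      (∀ i : ZMod 30, i ∉ ({m, m + 1, m + 2, m + 3, m + 4} : Set (ZMod 30)) →
        cLt (V t) (V i)) := by
  obtain ⟨-, hconv, hW⟩ := hV
  obtain ⟨m, harc, hlt⟩ := hconv.exists_isLowestArc_cLt_of_mem_diagGon (s := 5) (by norm_num)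
    (by norm_num)
  have hoffset (i : ZMod 30) : i = m + ↑(i - m).val := by simp
  refine ⟨m, fun t ht => ⟨fun k => ?_, fun i hi => ?_⟩⟩
  · rw [hoffset t]
    exact hlt _ (hW k) _ (mem_five_consecutive_iff.1 ht)
  · rw [hoffset t, hoffset i]
    exact harc _ _ (mem_five_consecutive_iff.1 ht)
      (not_lt.1 (mt mem_five_consecutive_iff.2 hi)) (ZMod.val_lt _)
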